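/- Let $U(v) = -e^{-\eta v}$ with $\eta > 0$, let $\beta_1 \in \mathbb{R}$, $\beta_2 \neq 0$, $\beta^2 = \beta_1^2 + \beta_2^2$, and $k = \eta\beta_2^2/\beta^2$. Suppose $h(t,x,v) = U(v)\psi(t,x)^{\eta/k}$ where $\psi : [0,T]\times\mathbb{R} \to (0,\infty)$ is $C^{1,2}$. Then $h$ satisfies the HJB equation $\partial_t h + \frac{\sigma^2}{2}\partial_{xx}h + b\,\partial_x h + \sup_{\pi \in \mathbb{R}}\{\frac{\pi^2\beta^2}{2}\partial_{vv}h + \pi\beta_1\sigma\,\partial_{vx}h + \pi g\,\partial_v h\} = 0$ if and only if $\psi$ satisfies the linear PDE $\partial_t\psi + \frac{\sigma^2}{2}\partial_{xx}\psi + \left(b - \frac{\beta_1 g\sigma}{\beta^2}\right)\partial_x\psi - \frac{kg^2}{2\beta^2\eta}\psi = 0$, and in this case the maximizing $\pi$ is $\pi^*(t,x) = \frac{1}{\beta^2}\left[\frac{g(t,x)}{\eta} + \frac{\beta_1\sigma(t,x)}{k}\frac{\partial_x\psi(t,x)}{\psi(t,x)}\right]$. -/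
import Mathlib


set_option maxHeartbeats 2000000 in
/-- With `U(v) = -e^{-ηv}`, `β² = β₁² + β₂²`, `k = ηβ₂²/β²` and
`h(t,x,v) = U(v) ψ(t,x)^{η/k}` for a positive `C^{1,2}` function `ψ`, the function
`h` satisfies the HJB equation iff `ψ` satisfies the linear PDE
`∂ₜψ + σ²/2 ∂ₓₓψ + (b - β₁gσ/β²)∂ₓψ - kg²/(2β²η) ψ = 0`, and in this case the
supremum over `π` is attained at
`π*(t,x) = (1/β²)[g/η + (β₁σ/k)(∂ₓψ/ψ)]`. -/
theorem hjb_linearization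
    (η β₁ β₂ k : ℝ) (hη : 0 < η) (hβ₂ : β₂ ≠ 0)
    (hkdef : k = η * β₂ ^ 2 / (β₁ ^ 2 + β₂ ^ 2))
    (b σ g : ℝ → ℝ → ℝ) (ψ : ℝ → ℝ → ℝ) (hψpos : ∀ t x, 0 < ψ t x)
    (hψt : ∀ t x, DifferentiableAt ℝ (fun s => ψ s x) t)
    (hψx : ∀ t x, DifferentiableAt ℝ (fun y => ψ t y) x)
    (hψxx : ∀ t x, DifferentiableAt ℝ (deriv fun y => ψ t y) x)
    (h : ℝ → ℝ → ℝ → ℝ)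
    (hh : ∀ t x v, h t x v = -Real.exp (-η * v) * ψ t x ^ (η / k)) :
    ∀ t x : ℝ,
      ((∀ v : ℝ,
          deriv (fun s => h s x v) t
            + σ t x ^ 2 / 2 * deriv (deriv fun y => h t y v) x
            + b t x * deriv (fun y => h t y v) x
            + (⨆ π : ℝ,
                π ^ 2 * (β₁ ^ 2 + β₂ ^ 2) / 2 * deriv (deriv fun w => h t x w) v
                  + π * β₁ * σ t x * deriv (fun w => deriv (fun y => h t y w) x) v
                  + π * g t x * deriv (fun w => h t x w) v) = 0)
        ↔ deriv (fun s => ψ s x) t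
            + σ t x ^ 2 / 2 * deriv (deriv fun y => ψ t y) x
            + (b t x - β₁ * g t x * σ t x / (β₁ ^ 2 + β₂ ^ 2)) *
                deriv (fun y => ψ t y) x
            - k * g t x ^ 2 / (2 * (β₁ ^ 2 + β₂ ^ 2) * η) * ψ t x = 0) ∧
      (∀ v π : ℝ,
          π ^ 2 * (β₁ ^ 2 + β₂ ^ 2) / 2 * deriv (deriv fun w => h t x w) v
              + π * β₁ * σ t x * deriv (fun w => deriv (fun y => h t y w) x) v
              + π * g t x * deriv (fun w => h t x w) v
            ≤ (1 / (β₁ ^ 2 + β₂ ^ 2) *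
                  (g t x / η + β₁ * σ t x / k *
                    (deriv (fun y => ψ t y) x / ψ t x))) ^ 2 *
                  (β₁ ^ 2 + β₂ ^ 2) / 2 * deriv (deriv fun w => h t x w) v
              + (1 / (β₁ ^ 2 + β₂ ^ 2) *
                  (g t x / η + β₁ * σ t x / k *
                    (deriv (fun y => ψ t y) x / ψ t x))) * β₁ * σ t x *
                  deriv (fun w => deriv (fun y => h t y w) x) v
              + (1 / (β₁ ^ 2 + β₂ ^ 2) *
                  (g t x / η + β₁ * σ t x / k *
                    (deriv (fun y => ψ t y) x / ψ t x))) * g t x *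
                  deriv (fun w => h t x w) v) := by
  subst hkdef
  intro t x
  have hb22 : (0:ℝ) < β₂ ^ 2 := lt_of_le_of_ne (sq_nonneg β₂) (Ne.symm (pow_ne_zero 2 hβ₂))
  have hβ2 : (0:ℝ) < β₁ ^ 2 + β₂ ^ 2 := by linarith [sq_nonneg β₁]
  have hK : (0:ℝ) < η * β₂ ^ 2 / (β₁ ^ 2 + β₂ ^ 2) := div_pos (mul_pos hη hb22) hβ2
  have hA : (0:ℝ) < η / (η * β₂ ^ 2 / (β₁ ^ 2 + β₂ ^ 2)) := div_pos hη hK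
  have hp : 0 < ψ t x := hψpos t x
  have hPpos : 0 < ψ t x ^ (η / (η * β₂ ^ 2 / (β₁ ^ 2 + β₂ ^ 2))) := Real.rpow_pos_of_pos hp _
  have hexp : ∀ v : ℝ, HasDerivAt (fun w : ℝ => Real.exp (-η * w)) (Real.exp (-η * v) * -η) v := by
    intro v
    simpa using ((hasDerivAt_id v).const_mul (-η)).exp
  -- first derivative in v
  have hv1 : ∀ v : ℝ, deriv (fun w => h t x w) v = η * Real.exp (-η * v) * ψ t x ^ (η / (η * β₂ ^ 2 / (β₁ ^ 2 + β₂ ^ 2))) := by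
    intro v
    have h3 : (fun w => h t x w) = fun w => -Real.exp (-η * w) * (ψ t x ^ (η / (η * β₂ ^ 2 / (β₁ ^ 2 + β₂ ^ 2)))) := by
      funext w; rw [hh]
    have h4 : HasDerivAt (fun w : ℝ => -Real.exp (-η * w) * (ψ t x ^ (η / (η * β₂ ^ 2 / (β₁ ^ 2 + β₂ ^ 2)))))
        (-(Real.exp (-η * v) * -η) * (ψ t x ^ (η / (η * β₂ ^ 2 / (β₁ ^ 2 + β₂ ^ 2))))) v := (hexp v).neg.mul_const _
    rw [h3, h4.deriv]; ring
  -- second derivative in v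
  have hv2 : ∀ v : ℝ, deriv (deriv fun w => h t x w) v = -(η ^ 2 * Real.exp (-η * v) * ψ t x ^ (η / (η * β₂ ^ 2 / (β₁ ^ 2 + β₂ ^ 2)))) := by
    intro v
    have h3 : (deriv fun w => h t x w) = fun w => η * (ψ t x ^ (η / (η * β₂ ^ 2 / (β₁ ^ 2 + β₂ ^ 2)))) * Real.exp (-η * w) := by
      funext w; rw [hv1 w]; ring
    have h4 : HasDerivAt (fun w : ℝ => η * (ψ t x ^ (η / (η * β₂ ^ 2 / (β₁ ^ 2 + β₂ ^ 2)))) * Real.exp (-η * w))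
        (η * (ψ t x ^ (η / (η * β₂ ^ 2 / (β₁ ^ 2 + β₂ ^ 2)))) * (Real.exp (-η * v) * -η)) v := HasDerivAt.const_mul _ (hexp v)
    rw [h3, h4.deriv]; ring
  -- x-derivative of h (at any point y)
  have hDy : ∀ v y : ℝ, HasDerivAt (fun y' => h t y' v)
      (-Real.exp (-η * v) * (deriv (fun y' => ψ t y') y * (η / (η * β₂ ^ 2 / (β₁ ^ 2 + β₂ ^ 2))) * ψ t y ^ ((η / (η * β₂ ^ 2 / (β₁ ^ 2 + β₂ ^ 2))) - 1))) y := by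
    intro v y
    have h3 : (fun y' => h t y' v) = fun y' => -Real.exp (-η * v) * ψ t y' ^ (η / (η * β₂ ^ 2 / (β₁ ^ 2 + β₂ ^ 2))) := by
      funext y'; rw [hh]
    rw [h3]
    exact HasDerivAt.const_mul _ ((hψx t y).hasDerivAt.rpow_const (Or.inl (hψpos t y).ne'))
  have hdx : ∀ v : ℝ, deriv (fun y => h t y v) x = -Real.exp (-η * v) * (deriv (fun y => ψ t y) x * (η / (η * β₂ ^ 2 / (β₁ ^ 2 + β₂ ^ 2))) * (ψ t x ^ (η / (η * β₂ ^ 2 / (β₁ ^ 2 + β₂ ^ 2))) / ψ t x)) := by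
    intro v
    rw [(hDy v x).deriv, Real.rpow_sub hp, Real.rpow_one]
  -- mixed derivative
  have hvx : ∀ v : ℝ, deriv (fun w => deriv (fun y => h t y w) x) v = η * Real.exp (-η * v) * (deriv (fun y => ψ t y) x * (η / (η * β₂ ^ 2 / (β₁ ^ 2 + β₂ ^ 2))) * (ψ t x ^ (η / (η * β₂ ^ 2 / (β₁ ^ 2 + β₂ ^ 2))) / ψ t x)) := by
    intro v
    have h3 : (fun w => deriv (fun y => h t y w) x)
        = fun w => -(deriv (fun y => ψ t y) x * (η / (η * β₂ ^ 2 / (β₁ ^ 2 + β₂ ^ 2))) * (ψ t x ^ (η / (η * β₂ ^ 2 / (β₁ ^ 2 + β₂ ^ 2))) / ψ t x)) * Real.exp (-η * w) := by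
      funext w; rw [hdx w]; ring
    have h4 : HasDerivAt (fun w : ℝ => -(deriv (fun y => ψ t y) x * (η / (η * β₂ ^ 2 / (β₁ ^ 2 + β₂ ^ 2))) * (ψ t x ^ (η / (η * β₂ ^ 2 / (β₁ ^ 2 + β₂ ^ 2))) / ψ t x)) * Real.exp (-η * w))
        (-(deriv (fun y => ψ t y) x * (η / (η * β₂ ^ 2 / (β₁ ^ 2 + β₂ ^ 2))) * (ψ t x ^ (η / (η * β₂ ^ 2 / (β₁ ^ 2 + β₂ ^ 2))) / ψ t x)) * (Real.exp (-η * v) * -η)) v :=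
      HasDerivAt.const_mul _ (hexp v)
    rw [h3, h4.deriv]; ring
  -- t-derivative
  have hdt : ∀ v : ℝ, deriv (fun s => h s x v) t = -Real.exp (-η * v) * (deriv (fun s => ψ s x) t * (η / (η * β₂ ^ 2 / (β₁ ^ 2 + β₂ ^ 2))) * (ψ t x ^ (η / (η * β₂ ^ 2 / (β₁ ^ 2 + β₂ ^ 2))) / ψ t x)) := by
    intro v
    have h3 : (fun s => h s x v) = fun s => -Real.exp (-η * v) * ψ s x ^ (η / (η * β₂ ^ 2 / (β₁ ^ 2 + β₂ ^ 2))) := by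
      funext s; rw [hh]
    have h4 : HasDerivAt (fun s => -Real.exp (-η * v) * ψ s x ^ (η / (η * β₂ ^ 2 / (β₁ ^ 2 + β₂ ^ 2))))
        (-Real.exp (-η * v) * (deriv (fun s => ψ s x) t * (η / (η * β₂ ^ 2 / (β₁ ^ 2 + β₂ ^ 2))) * ψ t x ^ ((η / (η * β₂ ^ 2 / (β₁ ^ 2 + β₂ ^ 2))) - 1))) t :=
      HasDerivAt.const_mul _ ((hψt t x).hasDerivAt.rpow_const (Or.inl hp.ne'))
    rw [h3, h4.deriv, Real.rpow_sub hp, Real.rpow_one]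
  -- second x-derivative
  have hdxx : ∀ v : ℝ, deriv (deriv fun y => h t y v) x = -Real.exp (-η * v) * (η / (η * β₂ ^ 2 / (β₁ ^ 2 + β₂ ^ 2))) * (deriv (deriv fun y => ψ t y) x * (ψ t x ^ (η / (η * β₂ ^ 2 / (β₁ ^ 2 + β₂ ^ 2))) / ψ t x) + deriv (fun y => ψ t y) x * (deriv (fun y => ψ t y) x * ((η / (η * β₂ ^ 2 / (β₁ ^ 2 + β₂ ^ 2))) - 1) * (ψ t x ^ (η / (η * β₂ ^ 2 / (β₁ ^ 2 + β₂ ^ 2))) / ψ t x / ψ t x))) := by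
    intro v
    have h3 : (deriv fun y => h t y v)
        = fun y => -Real.exp (-η * v) * (η / (η * β₂ ^ 2 / (β₁ ^ 2 + β₂ ^ 2))) * (deriv (fun y' => ψ t y') y * ψ t y ^ ((η / (η * β₂ ^ 2 / (β₁ ^ 2 + β₂ ^ 2))) - 1)) := by
      funext y; rw [(hDy v y).deriv]; ring
    have h1 : HasDerivAt (fun y => deriv (fun y' => ψ t y') y * ψ t y ^ ((η / (η * β₂ ^ 2 / (β₁ ^ 2 + β₂ ^ 2))) - 1))
        (deriv (deriv fun y => ψ t y) x * ψ t x ^ ((η / (η * β₂ ^ 2 / (β₁ ^ 2 + β₂ ^ 2))) - 1) + deriv (fun y => ψ t y) x * (deriv (fun y => ψ t y) x * ((η / (η * β₂ ^ 2 / (β₁ ^ 2 + β₂ ^ 2))) - 1) * ψ t x ^ ((η / (η * β₂ ^ 2 / (β₁ ^ 2 + β₂ ^ 2))) - 1 - 1))) x :=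
      (hψxx t x).hasDerivAt.mul ((hψx t x).hasDerivAt.rpow_const (Or.inl hp.ne'))
    have h4 := HasDerivAt.const_mul (-Real.exp (-η * v) * (η / (η * β₂ ^ 2 / (β₁ ^ 2 + β₂ ^ 2)))) h1
    rw [h3, h4.deriv]
    simp only [Real.rpow_sub hp, Real.rpow_one]
  -- quadratic maximization inequality
  have key : ∀ v q : ℝ, q ^ 2 * (β₁ ^ 2 + β₂ ^ 2) / 2 * (-(η ^ 2 * Real.exp (-η * v) * ψ t x ^ (η / (η * β₂ ^ 2 / (β₁ ^ 2 + β₂ ^ 2))))) + q * β₁ * σ t x * (η * Real.exp (-η * v) * (deriv (fun y => ψ t y) x * (η / (η * β₂ ^ 2 / (β₁ ^ 2 + β₂ ^ 2))) * (ψ t x ^ (η / (η * β₂ ^ 2 / (β₁ ^ 2 + β₂ ^ 2))) / ψ t x))) + q * g t x * (η * Real.exp (-η * v) * ψ t x ^ (η / (η * β₂ ^ 2 / (β₁ ^ 2 + β₂ ^ 2)))) ≤ (1 / (β₁ ^ 2 + β₂ ^ 2) * (g t x / η + β₁ * σ t x / (η * β₂ ^ 2 / (β₁ ^ 2 + β₂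 ^ 2)) * (deriv (fun y => ψ t y) x / ψ t x))) ^ 2 * (β₁ ^ 2 + β₂ ^ 2) / 2 * (-(η ^ 2 * Real.exp (-η * v) * ψ t x ^ (η / (η * β₂ ^ 2 / (β₁ ^ 2 + β₂ ^ 2))))) + (1 / (β₁ ^ 2 + β₂ ^ 2) * (g t x / η + β₁ * σ t x / (η * β₂ ^ 2 / (β₁ ^ 2 + β₂ ^ 2)) * (deriv (fun y => ψ t y) x / ψ t x))) * β₁ * σ t x * (η * Real.exp (-η * v) * (deriv (fun y => ψ t y) x * (η / (η * β₂ ^ 2 / (β₁ ^ 2 + β₂ ^ 2))) * (ψ t x ^ (η / (η * β₂ ^ 2 / (β₁ ^ 2 + β₂ ^ 2))) / ψ t x))) + (1 / (β₁ ^ 2 + β₂ ^ 2) * (g t x / η + β₁ * σ t x / (η * β₂ ^ 2 / (β₁ ^ 2 + β₂ ^ 2)) * (deriv (fun y => ψ t y) x / ψ t x))) * g t x * (η * Real.exp (-η * v) * ψ t x ^ (η / (η * β₂ ^ 2 / (β₁ ^ 2 + β₂ ^ 2)))) := by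
    intro v q
    have hE0 : (0:ℝ) < Real.exp (-η * v) := Real.exp_pos _
    have hrel : (β₁ ^ 2 + β₂ ^ 2) * η ^ 2 * Real.exp (-η * v) * (ψ t x ^ (η / (η * β₂ ^ 2 / (β₁ ^ 2 + β₂ ^ 2)))) * (1 / (β₁ ^ 2 + β₂ ^ 2) * (g t x / η + β₁ * σ t x / (η * β₂ ^ 2 / (β₁ ^ 2 + β₂ ^ 2)) * (deriv (fun y => ψ t y) x / ψ t x)))
        = β₁ * σ t x * (η * Real.exp (-η * v) * (deriv (fun y => ψ t y) x * (η / (η * β₂ ^ 2 / (β₁ ^ 2 + β₂ ^ 2))) * (ψ t x ^ (η / (η * β₂ ^ 2 / (β₁ ^ 2 + β₂ ^ 2))) / ψ t x))) + g t x * (η * Real.exp (-η * v) * ψ t x ^ (η / (η * β₂ ^ 2 / (β₁ ^ 2 + β₂ ^ 2)))) := by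
      field_simp
      ring
    have heq : ((1 / (β₁ ^ 2 + β₂ ^ 2) * (g t x / η + β₁ * σ t x / (η * β₂ ^ 2 / (β₁ ^ 2 + β₂ ^ 2)) * (deriv (fun y => ψ t y) x / ψ t x))) ^ 2 * (β₁ ^ 2 + β₂ ^ 2) / 2 * (-(η ^ 2 * Real.exp (-η * v) * ψ t x ^ (η / (η * β₂ ^ 2 / (β₁ ^ 2 + β₂ ^ 2))))) + (1 / (β₁ ^ 2 + β₂ ^ 2) * (g t x / η + β₁ * σ t x / (η * β₂ ^ 2 / (β₁ ^ 2 + β₂ ^ 2)) * (deriv (fun y => ψ t y) x / ψ t x))) * β₁ * σ t x * (η * Real.exp (-η * v) * (deriv (fun y => ψ t y) x * (η / (η * β₂ ^ 2 / (β₁ ^ 2 + β₂ ^ 2))) * (ψ t x ^ (η / (η * β₂ ^ 2 / (β₁ ^ 2 + β₂ ^ 2))) / ψ t x))) + (1 / (β₁ ^ 2 + β₂ ^ 2) * (g t x / η + β₁ * σ t x / (η * β₂ ^ 2 / (β₁ ^ 2 + β₂ ^ 2)) * (deriv (fun y => ψ t y) x / ψ t x))) * g t x * (η * Real.exp (-η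 * v) * ψ t x ^ (η / (η * β₂ ^ 2 / (β₁ ^ 2 + β₂ ^ 2))))) - (q ^ 2 * (β₁ ^ 2 + β₂ ^ 2) / 2 * (-(η ^ 2 * Real.exp (-η * v) * ψ t x ^ (η / (η * β₂ ^ 2 / (β₁ ^ 2 + β₂ ^ 2))))) + q * β₁ * σ t x * (η * Real.exp (-η * v) * (deriv (fun y => ψ t y) x * (η / (η * β₂ ^ 2 / (β₁ ^ 2 + β₂ ^ 2))) * (ψ t x ^ (η / (η * β₂ ^ 2 / (β₁ ^ 2 + β₂ ^ 2))) / ψ t x))) + q * g t x * (η * Real.exp (-η * v) * ψ t x ^ (η / (η * β₂ ^ 2 / (β₁ ^ 2 + β₂ ^ 2)))))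
        = (β₁ ^ 2 + β₂ ^ 2) * η ^ 2 * Real.exp (-η * v) * (ψ t x ^ (η / (η * β₂ ^ 2 / (β₁ ^ 2 + β₂ ^ 2)))) / 2 * ((1 / (β₁ ^ 2 + β₂ ^ 2) * (g t x / η + β₁ * σ t x / (η * β₂ ^ 2 / (β₁ ^ 2 + β₂ ^ 2)) * (deriv (fun y => ψ t y) x / ψ t x))) - q) ^ 2 := by
      linear_combination (q - (1 / (β₁ ^ 2 + β₂ ^ 2) * (g t x / η + β₁ * σ t x / (η * β₂ ^ 2 / (β₁ ^ 2 + β₂ ^ 2)) * (deriv (fun y => ψ t y) x / ψ t x)))) * hrel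
    have hC : (0:ℝ) ≤ (β₁ ^ 2 + β₂ ^ 2) * η ^ 2 * Real.exp (-η * v) * (ψ t x ^ (η / (η * β₂ ^ 2 / (β₁ ^ 2 + β₂ ^ 2)))) / 2 :=
      div_nonneg (mul_nonneg (mul_nonneg (mul_nonneg hβ2.le (sq_nonneg η)) hE0.le) hPpos.le)
        (by norm_num)
    nlinarith [mul_nonneg hC (sq_nonneg ((1 / (β₁ ^ 2 + β₂ ^ 2) * (g t x / η + β₁ * σ t x / (η * β₂ ^ 2 / (β₁ ^ 2 + β₂ ^ 2)) * (deriv (fun y => ψ t y) x / ψ t x))) - q)), heq]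
  -- evaluating the supremum
  have hsup : ∀ v : ℝ, (⨆ π : ℝ,
        π ^ 2 * (β₁ ^ 2 + β₂ ^ 2) / 2 * deriv (deriv fun w => h t x w) v
          + π * β₁ * σ t x * deriv (fun w => deriv (fun y => h t y w) x) v
          + π * g t x * deriv (fun w => h t x w) v) = (1 / (β₁ ^ 2 + β₂ ^ 2) * (g t x / η + β₁ * σ t x / (η * β₂ ^ 2 / (β₁ ^ 2 + β₂ ^ 2)) * (deriv (fun y => ψ t y) x / ψ t x))) ^ 2 * (β₁ ^ 2 + β₂ ^ 2) / 2 * (-(η ^ 2 * Real.exp (-η * v) * ψ t x ^ (η / (η * β₂ ^ 2 / (β₁ ^ 2 + β₂ ^ 2))))) + (1 / (β₁ ^ 2 + β₂ ^ 2) * (g t x / η + β₁ * σ t x / (η * β₂ ^ 2 / (β₁ ^ 2 + β₂ ^ 2)) * (deriv (fun y => ψ t y) x / ψ t x))) * β₁ * σ t x * (η * Real.exp (-η * v) * (deriv (fun y => ψ t y) x * (η / (η * β₂ ^ 2 / (β₁ ^ 2 + β₂ ^ 2))) * (ψ t x ^ (η / (η * β₂ ^ 2 / (β₁ ^ 2 +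 β₂ ^ 2))) / ψ t x))) + (1 / (β₁ ^ 2 + β₂ ^ 2) * (g t x / η + β₁ * σ t x / (η * β₂ ^ 2 / (β₁ ^ 2 + β₂ ^ 2)) * (deriv (fun y => ψ t y) x / ψ t x))) * g t x * (η * Real.exp (-η * v) * ψ t x ^ (η / (η * β₂ ^ 2 / (β₁ ^ 2 + β₂ ^ 2)))) := by
    intro v
    have hbody : ∀ q : ℝ,
        q ^ 2 * (β₁ ^ 2 + β₂ ^ 2) / 2 * deriv (deriv fun w => h t x w) v
          + q * β₁ * σ t x * deriv (fun w => deriv (fun y => h t y w) x) v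
          + q * g t x * deriv (fun w => h t x w) v = q ^ 2 * (β₁ ^ 2 + β₂ ^ 2) / 2 * (-(η ^ 2 * Real.exp (-η * v) * ψ t x ^ (η / (η * β₂ ^ 2 / (β₁ ^ 2 + β₂ ^ 2))))) + q * β₁ * σ t x * (η * Real.exp (-η * v) * (deriv (fun y => ψ t y) x * (η / (η * β₂ ^ 2 / (β₁ ^ 2 + β₂ ^ 2))) * (ψ t x ^ (η / (η * β₂ ^ 2 / (β₁ ^ 2 + β₂ ^ 2))) / ψ t x))) + q * g t x * (η * Real.exp (-η * v) * ψ t x ^ (η / (η * β₂ ^ 2 / (β₁ ^ 2 + β₂ ^ 2)))) := by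
      intro q; rw [hv2 v, hvx v, hv1 v]
    simp only [hbody]
    have hbdd : BddAbove (Set.range fun q : ℝ => q ^ 2 * (β₁ ^ 2 + β₂ ^ 2) / 2 * (-(η ^ 2 * Real.exp (-η * v) * ψ t x ^ (η / (η * β₂ ^ 2 / (β₁ ^ 2 + β₂ ^ 2))))) + q * β₁ * σ t x * (η * Real.exp (-η * v) * (deriv (fun y => ψ t y) x * (η / (η * β₂ ^ 2 / (β₁ ^ 2 + β₂ ^ 2))) * (ψ t x ^ (η / (η * β₂ ^ 2 / (β₁ ^ 2 + β₂ ^ 2))) / ψ t x))) + q * g t x * (η * Real.exp (-η * v) * ψ t x ^ (η / (η * β₂ ^ 2 / (β₁ ^ 2 + β₂ ^ 2))))) := by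
      refine ⟨(1 / (β₁ ^ 2 + β₂ ^ 2) * (g t x / η + β₁ * σ t x / (η * β₂ ^ 2 / (β₁ ^ 2 + β₂ ^ 2)) * (deriv (fun y => ψ t y) x / ψ t x))) ^ 2 * (β₁ ^ 2 + β₂ ^ 2) / 2 * (-(η ^ 2 * Real.exp (-η * v) * ψ t x ^ (η / (η * β₂ ^ 2 / (β₁ ^ 2 + β₂ ^ 2))))) + (1 / (β₁ ^ 2 + β₂ ^ 2) * (g t x / η + β₁ * σ t x / (η * β₂ ^ 2 / (β₁ ^ 2 + β₂ ^ 2)) * (deriv (fun y => ψ t y) x / ψ t x))) * β₁ * σ t x * (η * Real.exp (-η * v) * (deriv (fun y => ψ t y) x * (η / (η * β₂ ^ 2 / (β₁ ^ 2 + β₂ ^ 2))) * (ψ t x ^ (η / (η * β₂ ^ 2 / (β₁ ^ 2 + β₂ ^ 2))) / ψ t x))) + (1 / (β₁ ^ 2 + β₂ ^ 2) * (g t x / η + β₁ * σ t x / (η * β₂ ^ 2 / (β₁ ^ 2 + β₂ ^ 2)) * (deriv (fun y => ψ t y) x / ψ t x))) * g t x * (η * Real.exp (-η * v) * ψ t x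 ^ (η / (η * β₂ ^ 2 / (β₁ ^ 2 + β₂ ^ 2)))), ?_⟩
      rintro y ⟨q, rfl⟩
      exact key v q
    exact le_antisymm (ciSup_le fun q => key v q) (le_ciSup hbdd _)
  -- the key algebraic identity
  have hid : ∀ v : ℝ, -Real.exp (-η * v) * (deriv (fun s => ψ s x) t * (η / (η * β₂ ^ 2 / (β₁ ^ 2 + β₂ ^ 2))) * (ψ t x ^ (η / (η * β₂ ^ 2 / (β₁ ^ 2 + β₂ ^ 2))) / ψ t x)) + σ t x ^ 2 / 2 * (-Real.exp (-η * v) * (η / (η * β₂ ^ 2 / (β₁ ^ 2 + β₂ ^ 2))) * (deriv (deriv fun y => ψ t y) x * (ψ t x ^ (η / (η * β₂ ^ 2 / (β₁ ^ 2 + β₂ ^ 2))) / ψ t x) + deriv (fun y => ψ t y) x * (deriv (fun y => ψ t y) x * ((η / (η * β₂ ^ 2 / (β₁ ^ 2 + β₂ ^ 2))) - 1) * (ψ t x ^ (η / (η * β₂ ^ 2 / (β₁ ^ 2 + β₂ ^ 2))) / ψ t x / ψ t x)))) + b t x * (-Real.exp (-η * v) * (deriv (fun y => ψ t y) x * (η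 / (η * β₂ ^ 2 / (β₁ ^ 2 + β₂ ^ 2))) * (ψ t x ^ (η / (η * β₂ ^ 2 / (β₁ ^ 2 + β₂ ^ 2))) / ψ t x))) + ((1 / (β₁ ^ 2 + β₂ ^ 2) * (g t x / η + β₁ * σ t x / (η * β₂ ^ 2 / (β₁ ^ 2 + β₂ ^ 2)) * (deriv (fun y => ψ t y) x / ψ t x))) ^ 2 * (β₁ ^ 2 + β₂ ^ 2) / 2 * (-(η ^ 2 * Real.exp (-η * v) * ψ t x ^ (η / (η * β₂ ^ 2 / (β₁ ^ 2 + β₂ ^ 2))))) + (1 / (β₁ ^ 2 + β₂ ^ 2) * (g t x / η + β₁ * σ t x / (η * β₂ ^ 2 / (β₁ ^ 2 + β₂ ^ 2)) * (deriv (fun y => ψ t y) x / ψ t x))) * β₁ * σ t x * (η * Real.exp (-η * v) * (deriv (fun y => ψ t y) x * (η / (η * β₂ ^ 2 / (β₁ ^ 2 + β₂ ^ 2))) * (ψ t x ^ (η / (η * β₂ ^ 2 / (β₁ ^ 2 + β₂ ^ 2))) / ψ t x))) + (1 / (β₁ ^ 2 + β₂ ^ 2) * (g t x / η + β₁ * σ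 t x / (η * β₂ ^ 2 / (β₁ ^ 2 + β₂ ^ 2)) * (deriv (fun y => ψ t y) x / ψ t x))) * g t x * (η * Real.exp (-η * v) * ψ t x ^ (η / (η * β₂ ^ 2 / (β₁ ^ 2 + β₂ ^ 2)))))
      = (-(Real.exp (-η * v) * (η / (η * β₂ ^ 2 / (β₁ ^ 2 + β₂ ^ 2))) * (ψ t x ^ (η / (η * β₂ ^ 2 / (β₁ ^ 2 + β₂ ^ 2))) / ψ t x))) * (deriv (fun s => ψ s x) t + σ t x ^ 2 / 2 * deriv (deriv fun y => ψ t y) x + (b t x - β₁ * g t x * σ t x / (β₁ ^ 2 + β₂ ^ 2)) * deriv (fun y => ψ t y) x - (η * β₂ ^ 2 / (β₁ ^ 2 + β₂ ^ 2)) * g t x ^ 2 / (2 * (β₁ ^ 2 + β₂ ^ 2) * η) * ψ t x) := by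
    intro v
    field_simp
    ring
  refine ⟨⟨fun H => ?_, fun hL v => ?_⟩, fun v π => ?_⟩
  · have h0 := H 0
    rw [hsup 0, hdt 0, hdxx 0, hdx 0, hid 0] at h0
    have hfacpos : 0 < Real.exp (-η * 0) * (η / (η * β₂ ^ 2 / (β₁ ^ 2 + β₂ ^ 2))) * (ψ t x ^ (η / (η * β₂ ^ 2 / (β₁ ^ 2 + β₂ ^ 2))) / ψ t x) :=
      mul_pos (mul_pos (Real.exp_pos _) hA) (div_pos hPpos hp)
    rcases mul_eq_zero.mp h0 with h1 | h1
    · exact absurd h1 (neg_ne_zero.mpr hfacpos.ne')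
    · exact h1
  · rw [hsup v, hdt v, hdxx v, hdx v, hid v, hL, mul_zero]
  · rw [hv2 v, hvx v, hv1 v]
    exact key v π
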